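/- arXiv:0709.1578 — 2 statements merged into one kernel-verified Lean document; each statement's English description precedes it below -/
import Mathlib

section
/- The reduced Bernstein polynomial admits the equivalent characterization without the f^{s+1} term: b(s)h^s = P(s)·h^{s+1} + Σᵢ Pᵢ(s)·h'_{xᵢ}h^s for some P, Pᵢ ∈ 𝒟[s] if and only if b(s)h^s = Σᵢ Qᵢ(s)·h'_{xᵢ}h^s for some Qᵢ(s) ∈ 𝒟[s]. Equivalently, h^{s+1} ∈ 𝒟[s](h'_{x₁},…,h'_{xₙ})h^s, i.e. h ∈ 𝒟[s](h'_{x₁},…,h'_{xₙ}) + Ann_{𝒟[s]}h^s. -/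
open Polynomial

noncomputable section

set_option maxHeartbeats 1000000
set_option synthInstance.maxHeartbeats 400000

/-- The ring `𝒪` of germs (polynomial model `ℂ[x₁,…,xₙ]`). -/
abbrev OO (n : ℕ) := MvPolynomial (Fin n) ℂ
/-- The fraction field of `𝒪`. -/
abbrev KK (n : ℕ) := FractionRing (OO n)

variable {n : ℕ}

/-- Inclusion `𝒪 → K`. -/
def toK {n : ℕ} (r : OO n) : KK n := algebraMap _ _ r

/-- A family of derivations of `K` extending the partial derivatives `∂/∂xᵢ` of `𝒪`. -/
def ExtendsPderiv (d : Fin n → Derivation ℂ (KK n) (KK n)) : Prop :=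
  ∀ (i : Fin n) (r : OO n), d i (toK r) = toK (MvPolynomial.pderiv i r)

/-- Coefficientwise action of a derivation of `K` on `K[s]`. -/
def coeffDer (d : Derivation ℂ (KK n) (KK n)) :
    Derivation ℂ (Polynomial (KK n)) (Polynomial (KK n)) :=
  PolynomialModule.equivPolynomialSelf.compDer d.mapCoeffs

/-- Multiplication operator on `K[s]`. -/
def mulOp (a : Polynomial (KK n)) : Module.End ℂ (Polynomial (KK n)) :=
  LinearMap.mulLeft ℂ a

/-- Twisted partial-derivative operator on `K[s]·f^s`:
`∂ᵢ(g(s) f^s) = ((∂ᵢ g)(s) + s·g(s)·(∂ᵢf/f))·f^s`. -/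
def Dop (d : Derivation ℂ (KK n) (KK n)) (f : OO n) : Module.End ℂ (Polynomial (KK n)) :=
  (coeffDer d).toLinearMap + mulOp (Polynomial.X * Polynomial.C (d (toK f) / toK f))

/-- The image of `𝒟[s]` in `End(K[s]·f^s)`: the ℂ-algebra generated by multiplications by
elements of `𝒪`, multiplication by `s`, and the twisted partials `∂ᵢ`. -/
def WeylS (d : Fin n → Derivation ℂ (KK n) (KK n)) (f : OO n) :
    Subalgebra ℂ (Module.End ℂ (Polynomial (KK n))) :=
  Algebra.adjoin ℂ
    ((Set.range fun r : OO n => mulOp (Polynomial.C (toK r))) ∪ {mulOp Polynomial.X} ∪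
      Set.range fun i => Dop (d i) f)

/-- The `𝒟[s]`-orbit span `𝒟[s]·T` of a set `T ⊆ K[s]·f^s`. -/
def DSpan (d : Fin n → Derivation ℂ (KK n) (KK n)) (f : OO n)
    (T : Set (Polynomial (KK n))) : Submodule ℂ (Polynomial (KK n)) :=
  Submodule.span ℂ {y | ∃ P ∈ WeylS d f, ∃ t ∈ T, y = P t}

/-- The image of `𝒟` in `End(K)` (untwisted action). -/
def Weyl0 (d : Fin n → Derivation ℂ (KK n) (KK n)) : Subalgebra ℂ (Module.End ℂ (KK n)) :=
  Algebra.adjoin ℂ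
    ((Set.range fun r : OO n => LinearMap.mulLeft ℂ (toK r)) ∪
      Set.range fun i => (d i).toLinearMap)

/-- The `𝒟`-orbit span `𝒟·T` of a set `T ⊆ K`. -/
def DSpan0 (d : Fin n → Derivation ℂ (KK n) (KK n)) (T : Set (KK n)) : Submodule ℂ (KK n) :=
  Submodule.span ℂ {y | ∃ P ∈ Weyl0 d, ∃ t ∈ T, y = P t}

/-- The ℂ-submodule `Σ_{g ∈ G} 𝒪[1/g]` of `K`. -/
def locSub (G : Set (OO n)) : Submodule ℂ (KK n) :=
  Submodule.span ℂ {x | ∃ r : OO n, ∃ g ∈ G, ∃ k : ℕ, x = toK r * (toK g)⁻¹ ^ k}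

/-- Polynomials in `s` all of whose coefficients lie in `V`. -/
def polySub (V : Submodule ℂ (KK n)) : Submodule ℂ (Polynomial (KK n)) where
  carrier := {g | ∀ m, g.coeff m ∈ V}
  add_mem' := fun ha hb m => by simpa using V.add_mem (ha m) (hb m)
  zero_mem' := fun m => by rw [Polynomial.coeff_zero]; exact V.zero_mem
  smul_mem' := fun c g hg m => by
    simpa [Polynomial.coeff_smul] using V.smul_mem c (hg m)

/-- Maximal `(p+1)×(p+1)` minor of the Jacobian matrix of `(h₁,…,h_p,f)`
on the columns `cols`. -/
def minorHF {p : ℕ} (h : Fin p → OO n) (f : OO n) (cols : Fin (p + 1) → Fin n) : OO n :=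
  Matrix.det (Matrix.of fun i j =>
    Fin.lastCases (MvPolynomial.pderiv (cols j) f)
      (fun i' => MvPolynomial.pderiv (cols j) (h i')) i)

/-- `p×p` minor of the Jacobian matrix of `h = (h₁,…,h_p)` on the columns `cols`. -/
def minorH {p : ℕ} (h : Fin p → OO n) (cols : Fin p → Fin n) : OO n :=
  Matrix.det (Matrix.of fun i j => MvPolynomial.pderiv (cols j) (h i))

/-- Image of `b(s) ∈ ℂ[s]` in `K[s]`. -/
def bK {n : ℕ} (b : Polynomial ℂ) : Polynomial (KK n) :=
  b.map ((algebraMap (OO n) (KK n)).comp MvPolynomial.C)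

/-!
Let `I = {a ∈ 𝒪 | a·h^(s+1) ∈ 𝒟[s]·(∂₁h, …, ∂ₙh)·h^s}`, an ideal of `𝒪` containing every `∂ᵢh`.
It is closed under each `∂ᵢ`, because
`∂ᵢ(a·h^(s+1)) = ∂ᵢa·h^(s+1) + (s+1)·a·∂ᵢh·h^s` and the last term already lies in the span.
As `h` is a nonconstant polynomial, `I ≠ 0`; and a nonzero ideal of `ℂ[x₁, …, xₙ]` closed under
all partial derivatives contains `1` (differentiating an element of minimal degree would give a
nonzero element of smaller degree unless it is constant). Hence `h^(s+1) = 1·h^(s+1)` lies in the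
span, and a term `P·h^(s+1)` in a functional equation can be absorbed into the sum.
-/

namespace MvPolynomial

variable {σ R : Type*}

theorem exists_pderiv_ne_zero [CommSemiring R] [NoZeroDivisors R] [CharZero R]
    {p : MvPolynomial σ R} (hp : p.totalDegree ≠ 0) : ∃ i, pderiv i p ≠ 0 := by
  obtain ⟨m, hm, hm0⟩ : ∃ m ∈ p.support, m ≠ 0 := by
    by_contra! hconst
    refine hp (totalDegree_eq_zero_iff_eq_C.mpr (MvPolynomial.ext _ _ fun m => ?_))
    classical
    rw [coeff_C]
    split_ifs with h0
    · rw [h0]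
    · exact notMem_support_iff.mp fun hm => h0 (hconst m hm).symm
  obtain ⟨i, hi⟩ := Finsupp.ne_iff.mp hm0
  have hle : Finsupp.single i 1 ≤ m := Finsupp.single_le_iff.mpr (Nat.one_le_iff_ne_zero.mpr hi)
  refine ⟨i, fun h => ?_⟩
  have := coeff_pderiv (i := i) p (m - Finsupp.single i 1)
  rw [h, coeff_zero, tsub_add_cancel_of_le hle, eq_comm, mul_eq_zero] at this
  exact this.elim (mem_support_iff.mp hm) (Nat.cast_add_one_ne_zero _)

theorem totalDegree_pderiv_lt [CommSemiring R] {p : MvPolynomial σ R} {i : σ}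
    (h : pderiv i p ≠ 0) : (pderiv i p).totalDegree < p.totalDegree := by
  rw [totalDegree, Finset.sup_lt_iff (Nat.pos_of_ne_zero fun h0 => ?_)]
  · intro m hm
    have hm' : m + Finsupp.single i 1 ∈ p.support := by
      rw [mem_support_iff, coeff_pderiv] at hm
      exact mem_support_iff.mpr <| left_ne_zero_of_mul hm
    have := le_totalDegree hm'
    change Finsupp.degree (m + Finsupp.single i 1) ≤ _ at this
    rw [map_add, Finsupp.degree_single] at this
    exact this
  · rw [totalDegree_eq_zero_iff_eq_C.mp h0, pderiv_C] at h
    exact h rfl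

end MvPolynomial

open MvPolynomial in
theorem Ideal.eq_top_of_pderiv_mem {σ R : Type*} [Field R] [CharZero R]
    {I : Ideal (MvPolynomial σ R)} (hI : I ≠ ⊥) (hD : ∀ i, ∀ p ∈ I, pderiv i p ∈ I) : I = ⊤ := by
  obtain ⟨p, hpI, hp0⟩ := Submodule.exists_mem_ne_zero_of_ne_bot hI
  induction hk : p.totalDegree using Nat.strong_induction_on generalizing p with
  | _ k ih =>
    by_cases hk0 : p.totalDegree = 0
    · rw [totalDegree_eq_zero_iff_eq_C] at hk0
      refine I.eq_top_of_isUnit_mem hpI ?_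
      rw [hk0]
      exact (isUnit_iff_ne_zero.mpr fun hc => hp0 (by rw [hk0, hc, MvPolynomial.C_0])).map
        MvPolynomial.C
    · obtain ⟨i, hi⟩ := exists_pderiv_ne_zero hk0
      exact ih _ (hk ▸ totalDegree_pderiv_lt hi) _ (hD i p hpI) hi rfl

section DModule

open MvPolynomial (pderiv)

variable {d : Fin n → Derivation ℂ (KK n) (KK n)} {f : OO n}
  {T : Set (Polynomial (KK n))}

theorem toK_ne_zero {r : OO n} (hr : r ≠ 0) : toK r ≠ 0 :=
  (map_ne_zero_iff _ (IsFractionRing.injective (OO n) (KK n))).mpr hr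

theorem coeffDer_C (δ : Derivation ℂ (KK n) (KK n)) (c : KK n) :
    coeffDer δ (C c) = C (δ c) := by
  change PolynomialModule.equivPolynomialSelf (δ.mapCoeffs (C c)) = _
  rw [Derivation.mapCoeffs_C,
    PolynomialModule.equivPolynomialSelf_apply_eq, PolynomialModule.equivPolynomial_single,
    monomial_zero_left]

theorem Dop_C (δ : Derivation ℂ (KK n) (KK n)) (f : OO n) (c : KK n) :
    Dop δ f (C c) = C (δ c) + X * C (δ (toK f) / toK f * c) := by
  rw [Dop, LinearMap.add_apply, Derivation.coeFn_coe, coeffDer_C, mulOp, LinearMap.mulLeft_apply,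
    C_mul, mul_assoc]

theorem Dop_C_toK_mul (hd : ExtendsPderiv d) (hf : f ≠ 0) (i : Fin n) (a : OO n) :
    Dop (d i) f (C (toK (f * a))) =
      C (toK (f * pderiv i a)) + (1 + X) * C (toK (a * pderiv i f)) := by
  have hscalar : toK (pderiv i f) / toK f * toK (f * a) = toK (a * pderiv i f) := by
    have hfK := toK_ne_zero hf
    simp only [toK, map_mul] at hfK ⊢
    field_simp
  rw [Dop_C, hd, hd, hscalar, MvPolynomial.pderiv_mul]
  simp only [toK, map_add, map_mul]
  ring

theorem mulOp_C_toK_mem_WeylS (f r : OO n) : mulOp (C (toK r)) ∈ WeylS d f :=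
  Algebra.subset_adjoin (Or.inl (Or.inl ⟨r, rfl⟩))

theorem mulOp_X_mem_WeylS (f : OO n) : mulOp X ∈ WeylS d f :=
  Algebra.subset_adjoin (Or.inl (Or.inr rfl))

theorem Dop_mem_WeylS (f : OO n) (i : Fin n) : Dop (d i) f ∈ WeylS d f :=
  Algebra.subset_adjoin (Or.inr ⟨i, rfl⟩)

theorem DSpan.mem_of_mem {t : Polynomial (KK n)} (ht : t ∈ T) : t ∈ DSpan d f T :=
  Submodule.subset_span ⟨1, one_mem _, t, ht, rfl⟩

theorem DSpan.apply_mem {P : Module.End ℂ (Polynomial (KK n))} (hP : P ∈ WeylS d f)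
    {x : Polynomial (KK n)} (hx : x ∈ DSpan d f T) : P x ∈ DSpan d f T := by
  induction hx using Submodule.span_induction with
  | mem y hy =>
    obtain ⟨Q, hQ, t, ht, rfl⟩ := hy
    exact Submodule.subset_span ⟨P * Q, mul_mem hP hQ, t, ht, rfl⟩
  | zero => exact (map_zero P).symm ▸ zero_mem _
  | add x y _ _ hx hy => simpa using add_mem hx hy
  | smul c x _ hx => simpa using Submodule.smul_mem _ c hx

theorem DSpan.C_toK_mul_mem (r : OO n) {x : Polynomial (KK n)} (hx : x ∈ DSpan d f T) :
    C (toK r) * x ∈ DSpan d f T :=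
  DSpan.apply_mem (mulOp_C_toK_mem_WeylS f r) hx

theorem DSpan.X_mul_mem {x : Polynomial (KK n)} (hx : x ∈ DSpan d f T) :
    X * x ∈ DSpan d f T :=
  DSpan.apply_mem (mulOp_X_mem_WeylS f) hx

theorem DSpan.exists_sum_of_mem {ι : Type*} [Fintype ι] [DecidableEq ι]
    {g : ι → Polynomial (KK n)} {x : Polynomial (KK n)}
    (hx : x ∈ DSpan d f {y | ∃ i, y = g i}) :
    ∃ Q : ι → Module.End ℂ (Polynomial (KK n)), (∀ i, Q i ∈ WeylS d f) ∧ x = ∑ i, Q i (g i) := by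
  induction hx using Submodule.span_induction with
  | mem y hy =>
    obtain ⟨P, hP, t, ⟨i, rfl⟩, rfl⟩ := hy
    refine ⟨Pi.single i P, fun j => ?_, ?_⟩
    rcases eq_or_ne j i with rfl | hj
    · simpa using hP
    · simp [hj]
    rw [Finset.sum_eq_single_of_mem i (Finset.mem_univ _) fun j _ hj => by
      rw [Pi.single_eq_of_ne hj, LinearMap.zero_apply], Pi.single_eq_same]
  | zero => exact ⟨0, fun _ => zero_mem _, by simp⟩
  | add x y _ _ hx hy =>
    obtain ⟨Q, hQ, rfl⟩ := hx
    obtain ⟨Q', hQ', rfl⟩ := hy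
    exact ⟨Q + Q', fun i => add_mem (hQ i) (hQ' i), by simp [Finset.sum_add_distrib]⟩
  | smul c x _ hx =>
    obtain ⟨Q, hQ, rfl⟩ := hx
    exact ⟨c • Q, fun i => Subalgebra.smul_mem _ (hQ i) c, by simp [Finset.smul_sum]⟩

/-- The ideal `{a ∈ 𝒪 | a·f^(s+1) ∈ 𝒟[s]·T}`; elements `g ∈ K[s]` stand for `g·f^s`. -/
def colonIdeal (d : Fin n → Derivation ℂ (KK n) (KK n)) (f : OO n)
    (T : Set (Polynomial (KK n))) : Ideal (OO n) where
  carrier := {a | C (toK (f * a)) ∈ DSpan d f T}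
  add_mem' {a b} ha hb := by
    change C (toK (f * (a + b))) ∈ DSpan d f T
    simpa only [mul_add, toK, map_add] using add_mem ha hb
  zero_mem' := by
    change C (toK (f * 0)) ∈ DSpan d f T
    simpa only [mul_zero, toK, map_zero] using zero_mem _
  smul_mem' r a ha := by
    change C (toK (f * (r * a))) ∈ DSpan d f T
    rw [mul_left_comm]
    simpa only [toK, map_mul] using DSpan.C_toK_mul_mem r ha

theorem mem_colonIdeal {a : OO n} : a ∈ colonIdeal d f T ↔ C (toK (f * a)) ∈ DSpan d f T :=
  Iff.rfl

theorem pderiv_self_mem_colonIdeal {i : Fin n} (hi : C (toK (pderiv i f)) ∈ T) :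
    pderiv i f ∈ colonIdeal d f T := by
  simpa only [mem_colonIdeal, toK, map_mul] using DSpan.C_toK_mul_mem f (DSpan.mem_of_mem hi)

theorem pderiv_mem_colonIdeal (hd : ExtendsPderiv d) (hf : f ≠ 0) {i : Fin n}
    (hi : C (toK (pderiv i f)) ∈ T) {a : OO n} (ha : a ∈ colonIdeal d f T) :
    pderiv i a ∈ colonIdeal d f T := by
  have hDa := DSpan.apply_mem (Dop_mem_WeylS f i) (mem_colonIdeal.mp ha)
  have haf : C (toK (a * pderiv i f)) ∈ DSpan d f T := by
    simpa only [toK, map_mul] using DSpan.C_toK_mul_mem a (DSpan.mem_of_mem hi)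
  rw [Dop_C_toK_mul hd hf, add_mul, one_mul] at hDa
  rw [mem_colonIdeal, ← add_sub_cancel_right (C (toK (f * pderiv i a))) (_ + _)]
  exact sub_mem hDa (add_mem haf (DSpan.X_mul_mem haf))

theorem colonIdeal_eq_top (hT : ∀ i, C (toK (pderiv i f)) ∈ T)
    (hd : ExtendsPderiv d) (hf : f ≠ 0) (hdeg : f.totalDegree ≠ 0) :
    colonIdeal d f T = ⊤ := by
  obtain ⟨i, hi⟩ := MvPolynomial.exists_pderiv_ne_zero hdeg
  refine Ideal.eq_top_of_pderiv_mem ?_ fun j a => pderiv_mem_colonIdeal hd hf (hT j)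
  exact (Submodule.ne_bot_iff _).mpr ⟨_, pderiv_self_mem_colonIdeal (hT i), hi⟩

theorem C_toK_mem_DSpan (hT : ∀ i, C (toK (pderiv i f)) ∈ T)
    (hd : ExtendsPderiv d) (hf : f ≠ 0) (hdeg : f.totalDegree ≠ 0) :
    C (toK f) ∈ DSpan d f T := by
  have hone : (1 : OO n) ∈ colonIdeal d f T := by
    rw [colonIdeal_eq_top hT hd hf hdeg]
    exact Submodule.mem_top
  simpa only [mem_colonIdeal, mul_one] using hone

end DModule

/-- the reduced Bernstein polynomial admits the equivalent characterization
without the `h^(s+1)` term: `b(s)h^s = P(s)·h^(s+1) + Σᵢ Pᵢ(s)·h'_{xᵢ}h^s` for some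
`P, Pᵢ ∈ 𝒟[s]` iff `b(s)h^s = Σᵢ Qᵢ(s)·h'_{xᵢ}h^s` for some `Qᵢ ∈ 𝒟[s]`;
equivalently, `h^(s+1) ∈ 𝒟[s](h'_{x₁},…,h'_{xₙ})h^s`. -/
theorem reduced_bernstein_characterization (n : ℕ)
    (d : Fin n → Derivation ℂ (KK n) (KK n)) (hd : ExtendsPderiv d)
    (h : OO n) (h0 : h ≠ 0) (hnu : MvPolynomial.constantCoeff h = 0) :
    (∀ b : Polynomial ℂ,
      (∃ P ∈ WeylS d h, ∃ Pi : Fin n → Module.End ℂ (Polynomial (KK n)),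
        (∀ i, Pi i ∈ WeylS d h) ∧
        bK b = P (Polynomial.C (toK h))
          + ∑ i : Fin n, Pi i (Polynomial.C (toK (MvPolynomial.pderiv i h)))) ↔
      (∃ Qi : Fin n → Module.End ℂ (Polynomial (KK n)),
        (∀ i, Qi i ∈ WeylS d h) ∧
        bK b = ∑ i : Fin n, Qi i (Polynomial.C (toK (MvPolynomial.pderiv i h))))) ∧
    Polynomial.C (toK h) ∈
      DSpan d h {y | ∃ i : Fin n, y = Polynomial.C (toK (MvPolynomial.pderiv i h))} := by
  have hdeg : h.totalDegree ≠ 0 := fun hdeg => h0 <| by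
    rw [MvPolynomial.totalDegree_eq_zero_iff_eq_C.mp hdeg, ← MvPolynomial.constantCoeff_eq, hnu,
      map_zero]
  have hmem : C (toK h) ∈ DSpan d h {y | ∃ i : Fin n, y = C (toK (MvPolynomial.pderiv i h))} :=
    C_toK_mem_DSpan (fun i => ⟨i, rfl⟩) hd h0 hdeg
  refine ⟨fun b => ⟨?_, ?_⟩, hmem⟩
  · rintro ⟨P, hP, Pi, hPi, hb⟩
    refine DSpan.exists_sum_of_mem (hb ▸ add_mem (DSpan.apply_mem hP hmem) ?_)
    exact sum_mem fun i _ => DSpan.apply_mem (hPi i) (DSpan.mem_of_mem ⟨i, rfl⟩)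
  · rintro ⟨Q, hQ, hb⟩
    exact ⟨0, zero_mem _, Q, hQ, by rw [hb, LinearMap.zero_apply, zero_add]⟩
end
end

section
/- Normal crossing example for the quadric: for h = x₁² + ⋯ + x₄² and f₂ = x₅ in ℂ⁵ (or more variables), the identity 2·δ_h x₅^s = (Σ_{i=1}^4 ∂/∂xᵢ · xᵢ)·δ_h x₅^s holds in ℛ_h ⊗ x₅^s, where δ_h = class of 1/(x₁²+⋯+x₄²); equivalently, Σ_{i=1}^4 ∂/∂xᵢ(xᵢ/(x₁²+⋯+x₄²)) = 2/(x₁²+⋯+x₄²) as rational functions. Hence b'_{x₅}(h,s) = 1. -/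
/-! The radial field `x/q`, `q = x₁² + ⋯ + xₘ²`, has divergence `(m - 2)/q`, because
`∂ᵢ(xᵢ/q) = 1/q - 2xᵢ²/q²` and `Σ xᵢ² = q`; for `m = 4` this is the stated identity. For the
Bernstein-type polynomial: the Jacobian minor of `(q, x₅)` on the columns `(i, 5)` is `∂ᵢq = 2xᵢ`,
and as `x₅` does not involve `x₁, …, x₄` the twisted operators `∂ᵢ` act on the constants
`2xᵢ·δ` as ordinary derivations. Hence `Σᵢ ∂ᵢ·(2xᵢ·δ) = 4δ` lies in the `𝒟[s]`-span of the
minors times `δ`, so `b = 1` already satisfies the functional equation. -/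

open Polynomial

noncomputable section

set_option maxHeartbeats 1000000
set_option synthInstance.maxHeartbeats 400000

variable {n : ℕ}

open MvPolynomial

section Divergence

variable {R K ι : Type*} [CommRing R] [Field K] [Algebra R K]

theorem Derivation.apply_sum_sq (s : Finset ι) (D : Derivation R K K) (x : ι → K) :
    D (∑ j ∈ s, x j ^ 2) = ∑ j ∈ s, 2 * x j * D (x j) := by
  simp only [map_sum, Derivation.leibniz_pow, nsmul_eq_mul, smul_eq_mul]
  push_cast
  simp only [pow_one, mul_assoc]

theorem sum_derivation_mul_inv_sum_sq (s : Finset ι) (D : ι → Derivation R K K) (x : ι → K)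
    (hself : ∀ i ∈ s, D i (x i) = 1) (hne : ∀ i ∈ s, ∀ j ∈ s, j ≠ i → D i (x j) = 0)
    (hq : ∑ j ∈ s, x j ^ 2 ≠ 0) :
    ∑ i ∈ s, D i (x i * (∑ j ∈ s, x j ^ 2)⁻¹) = (s.card - 2) * (∑ j ∈ s, x j ^ 2)⁻¹ := by
  set q := ∑ j ∈ s, x j ^ 2
  have hDq : ∀ i ∈ s, D i q = 2 * x i := by
    intro i hi
    rw [Derivation.apply_sum_sq, Finset.sum_eq_single i
      (fun j hj hji => by rw [hne i hi j hj hji, mul_zero]) (absurd hi), hself i hi, mul_one]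
  calc ∑ i ∈ s, D i (x i * q⁻¹) = ∑ i ∈ s, (q⁻¹ - 2 * q⁻¹ ^ 2 * x i ^ 2) := by
        refine Finset.sum_congr rfl fun i hi => ?_
        rw [Derivation.leibniz, Derivation.leibniz_inv, hDq i hi, hself i hi]
        simp only [smul_eq_mul]
        ring
    _ = s.card * q⁻¹ - 2 * q⁻¹ ^ 2 * q := by
        rw [Finset.sum_sub_distrib, Finset.sum_const, nsmul_eq_mul, ← Finset.mul_sum]
    _ = (s.card - 2) * q⁻¹ := by
        field_simp

end Divergence

theorem MvPolynomial.sum_X_sq_ne_zero {σ R : Type*} [CommRing R] [CharZero R] {s : Finset σ}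
    (hs : s.Nonempty) : ∑ i ∈ s, (X i : MvPolynomial σ R) ^ 2 ≠ 0 := fun h0 => by
  simpa [hs.ne_empty] using congrArg (eval fun _ => (1 : R)) h0

theorem MvPolynomial.pderiv_sum_X_sq_of_mem {σ R : Type*} [CommRing R] {s : Finset σ} {j : σ}
    (hj : j ∈ s) : pderiv j (∑ i ∈ s, (X i : MvPolynomial σ R) ^ 2) = 2 * X j := by
  classical
  simp [pderiv_X, Pi.single_apply, hj]

theorem MvPolynomial.pderiv_sum_X_sq_of_notMem {σ R : Type*} [CommRing R] {s : Finset σ} {j : σ}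
    (hj : j ∉ s) : pderiv j (∑ i ∈ s, (X i : MvPolynomial σ R) ^ 2) = 0 := by
  classical
  simp [pderiv_X, Pi.single_apply, hj]

theorem minorHF_fin_one (h : Fin 1 → OO n) (f : OO n) (cols : Fin 2 → Fin n) :
    minorHF h f cols = pderiv (cols 0) (h 0) * pderiv (cols 1) f -
      pderiv (cols 1) (h 0) * pderiv (cols 0) f := by
  rw [minorHF, Matrix.det_fin_two]
  rfl

theorem minorHF_sum_X_sq_X {s : Finset (Fin n)} {i j : Fin n} (hi : i ∈ s) (hj : j ∉ s) :
    minorHF (fun _ => ∑ k ∈ s, X k ^ 2) (X j) ![i, j] = 2 * X i := by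
  rw [minorHF_fin_one]
  simp only [Matrix.cons_val_zero, Matrix.cons_val_one]
  rw [pderiv_sum_X_sq_of_mem hi, pderiv_sum_X_sq_of_notMem hj, pderiv_X_self,
    pderiv_X_of_ne (ne_of_mem_of_not_mem hi hj).symm]
  ring

theorem bK_one : bK (n := n) 1 = 1 :=
  Polynomial.map_one _

theorem coeffDer_C_s19 (D : Derivation ℂ (KK n) (KK n)) (a : KK n) :
    coeffDer D (Polynomial.C a) = Polynomial.C (D a) := by
  show PolynomialModule.equivPolynomialSelf (D.mapCoeffs (Polynomial.C a)) = _
  rw [Derivation.mapCoeffs_C, PolynomialModule.equivPolynomialSelf_apply_eq,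
    PolynomialModule.equivPolynomial_single, Polynomial.monomial_zero_left]

theorem Dop_C_of_apply_toK_eq_zero {D : Derivation ℂ (KK n) (KK n)} {f : OO n}
    (hDf : D (toK f) = 0) (a : KK n) : Dop D f (Polynomial.C a) = Polynomial.C (D a) := by
  simp [Dop, mulOp, coeffDer_C_s19, hDf]

section Derivations

variable {d : Fin n → Derivation ℂ (KK n) (KK n)}

theorem ExtendsPderiv.apply_toK_X_self (hd : ExtendsPderiv d) (i : Fin n) :
    d i (toK (X i)) = 1 := by
  rw [hd, pderiv_X_self, toK, map_one]

theorem ExtendsPderiv.apply_toK_X_of_ne (hd : ExtendsPderiv d) {i j : Fin n} (h : j ≠ i) :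
    d i (toK (X j)) = 0 := by
  rw [hd, pderiv_X_of_ne h, toK, map_zero]

theorem ExtendsPderiv.sum_apply_X_mul_inv_sum_X_sq (hd : ExtendsPderiv d) {s : Finset (Fin n)}
    (hs : s.Nonempty) :
    ∑ i ∈ s, d i (toK (X i) * (toK (∑ j ∈ s, X j ^ 2))⁻¹) =
      ((s.card : KK n) - 2) * (toK (∑ j ∈ s, X j ^ 2))⁻¹ := by
  have hq : toK (∑ j ∈ s, (X j : OO n) ^ 2) = ∑ j ∈ s, toK (X j) ^ 2 := by
    simp only [toK, map_sum, map_pow]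
  rw [hq]
  refine sum_derivation_mul_inv_sum_sq s d _ (fun i _ => hd.apply_toK_X_self i)
    (fun i _ j _ h => hd.apply_toK_X_of_ne h) ?_
  rw [← hq, toK, map_ne_zero_iff _ (IsFractionRing.injective (OO n) (KK n))]
  exact sum_X_sq_ne_zero hs

theorem C_sum_apply_mem_DSpan {f : OO n} {T : Set (Polynomial (KK n))} {s : Finset (Fin n)}
    {a : Fin n → KK n}
    (hf : ∀ i ∈ s, d i (toK f) = 0) (ha : ∀ i ∈ s, Polynomial.C (a i) ∈ T) :
    Polynomial.C (∑ i ∈ s, d i (a i)) ∈ DSpan d f T := by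
  rw [map_sum]
  refine Submodule.sum_mem _ fun i hi => Submodule.subset_span ?_
  exact ⟨Dop (d i) f, Algebra.subset_adjoin (Or.inr ⟨i, rfl⟩), _, ha i hi,
    (Dop_C_of_apply_toK_eq_zero (hf i hi) _).symm⟩

theorem DSpan_mono {f : OO n} {T T' : Set (Polynomial (KK n))} (h : T ⊆ T') :
    DSpan d f T ≤ DSpan d f T' :=
  Submodule.span_mono fun _ ⟨P, hP, t, ht, hy⟩ => ⟨P, hP, t, h ht, hy⟩

theorem ExtendsPderiv.C_inv_mem_DSpan_minorHF (hd : ExtendsPderiv d) {s : Finset (Fin n)}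
    (hs : s.Nonempty) (hs2 : s.card ≠ 2) {j : Fin n} (hj : ∀ i ∈ s, i < j) :
    Polynomial.C (toK (∑ i ∈ s, X i ^ 2))⁻¹ ∈ DSpan d (X j)
      {y | ∃ cols : Fin 2 → Fin n, StrictMono cols ∧ y =
        Polynomial.C (toK (minorHF (fun _ => ∑ i ∈ s, X i ^ 2) (X j) cols) *
          (toK (∑ i ∈ s, X i ^ 2))⁻¹)} := by
  set q : OO n := ∑ i ∈ s, X i ^ 2
  have hjs : j ∉ s := fun h => lt_irrefl j (hj j h)
  have hsum : ∑ i ∈ s, d i (toK (minorHF (fun _ => q) (X j) ![i, j]) * (toK q)⁻¹) =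
      (2 * ((s.card : ℂ) - 2)) • (toK q)⁻¹ := by
    calc _ = ∑ i ∈ s, (d i (toK (X i) * (toK q)⁻¹) + d i (toK (X i) * (toK q)⁻¹)) := by
          refine Finset.sum_congr rfl fun i hi => ?_
          rw [minorHF_sum_X_sq_X hi hjs, show toK (2 * X i) = 2 * toK (X i) by
            rw [toK, toK, map_mul, map_ofNat], mul_assoc, two_mul, map_add]
      _ = (2 * ((s.card : ℂ) - 2)) • (toK q)⁻¹ := by
          rw [Finset.sum_add_distrib, hd.sum_apply_X_mul_inv_sum_X_sq hs, Algebra.smul_def]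
          simp only [map_mul, map_sub, map_natCast, map_ofNat]
          ring
  have hc : 2 * ((s.card : ℂ) - 2) ≠ 0 :=
    mul_ne_zero two_ne_zero (sub_ne_zero.2 (by exact_mod_cast hs2))
  rw [← inv_smul_smul₀ hc (Polynomial.C (toK q)⁻¹), Polynomial.smul_C, ← hsum]
  refine Submodule.smul_mem _ _ (C_sum_apply_mem_DSpan
    (fun i hi => hd.apply_toK_X_of_ne (hj i hi).ne') fun i hi => ⟨![i, j], ?_, rfl⟩)
  exact Fin.strictMono_iff_lt_succ.2 fun k => by fin_cases k; exact hj i hi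

end Derivations

/-- for `h = x₁²+⋯+x₄²` and `f₂ = x₅` in `ℂⁿ` (`n ≥ 5`), one has
`Σ_{i=1}^4 ∂/∂xᵢ(xᵢ/(x₁²+⋯+x₄²)) = 2/(x₁²+⋯+x₄²)` as rational functions — i.e.
`2·δ_h x₅^s = (Σ_{i=1}^4 ∂ᵢ·xᵢ)·δ_h x₅^s` — and hence `b'_{x₅}(h,s) = 1`. -/
theorem quadric_normal_crossing (n : ℕ) (hn : 5 ≤ n)
    (d : Fin n → Derivation ℂ (KK n) (KK n)) (hd : ExtendsPderiv d)
    (q : OO n) (hq : q = ∑ i ∈ Finset.univ.filter (fun i : Fin n => (i : ℕ) < 4),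
      MvPolynomial.X i ^ 2)
    (h : Fin 1 → OO n) (hh : h = fun _ => q)
    (f : OO n) (hf : f = MvPolynomial.X (⟨4, by omega⟩ : Fin n))
    (delta : KK n) (hdelta : delta = (toK q)⁻¹)
    (V : Submodule ℂ (KK n))
    (memB' : Polynomial ℂ → Prop)
    (hmemB' : ∀ b : Polynomial ℂ, memB' b ↔
      bK b * Polynomial.C delta ∈
        DSpan d f ({y | ∃ cols : Fin 2 → Fin n, StrictMono cols ∧
            y = Polynomial.C (toK (minorHF h f cols) * delta)} ∪
          {Polynomial.C (toK f * delta)}) ⊔ polySub V) :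
    -- the rational-function identity `Σ_{i<4} ∂ᵢ(xᵢ/q) = 2/q`
    (∑ i ∈ Finset.univ.filter (fun i : Fin n => (i : ℕ) < 4),
        d i (toK (MvPolynomial.X i) * (toK q)⁻¹) = 2 * (toK q)⁻¹) ∧
    -- hence `b'_{x₅}(h,s) = 1`: the unit polynomial `1` already satisfies the defining
    -- functional equation, so the monic generator is `1`
    memB' 1 ∧ (∀ c : Polynomial ℂ, memB' c → (1 : Polynomial ℂ) ∣ c) := by
  subst hq hh hf hdelta
  set s := Finset.univ.filter (fun i : Fin n => (i : ℕ) < 4)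
  have hs : s.card = 4 := by simp only [s, Fin.card_filter_val_lt]; omega
  have hs₀ : s.Nonempty := Finset.card_pos.1 (by omega)
  refine ⟨?_, ?_, fun c _ => one_dvd c⟩
  · rw [hd.sum_apply_X_mul_inv_sum_X_sq hs₀, hs]
    norm_num
  · rw [hmemB', bK_one, one_mul]
    refine Submodule.mem_sup_left (DSpan_mono Set.subset_union_left ?_)
    exact hd.C_inv_mem_DSpan_minorHF hs₀ (by omega) fun i hi => by simpa [s, Fin.lt_def] using hi
end
end
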